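/- arXiv:2410.19617 — 2 statements merged into one kernel-verified Lean document; each statement's English description precedes it below -/
import Mathlib

section
/- (Completeness of the MDI value) In the setting of the completeness probability formula, suppose additionally that W is a Hermitian matrix on ⊗_{j=1}^n ℂ^{d_j}, that τ^{(j)}_k (k = 0,…,d_j²−1) are density matrices on ℂ^{d_j}, and that β^{i_1…i_n}_{k_1…k_n} are real coefficients such that for EVERY tuple (i_1,…,i_n) one has W = Σ_{k_1,…,k_n} β^{i_1…i_n}_{k_1…k_n} · ⊗_{j=1}^n U^{(j)}_{i_j} τ^{(j)}_{k_j} U^{(j)†}_{i_j}. Define the input states ω^{(j)}_k = (τ^{(j)}_k)^T and the probabilities P(i_1,…,i_n | k_1,…,k_n) = tr[(⊗_j Π^{(j)}_{i_j}) · (ρ on the A parts, ⊗_j ω^{(j)}_{k_j} on the A' parts)]. Then the MDI value satisfies Σ_{i_1,…,i_n} Σ_{k_1,…,k_n} β^{i_1…i_n}_{k_1…k_n} P(i_1,…,i_n | k_1,…,k_n) = (Π_{j=1}^n d_j) · tr(W ρ). -/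
set_option maxHeartbeats 1000000


open Matrix BigOperators
open scoped ComplexOrder Kronecker

noncomputable section

/-- A density matrix: positive semidefinite with trace one. -/
def IsDensity {ι : Type*} [Fintype ι] (ρ : Matrix ι ι ℂ) : Prop :=
  ρ.PosSemidef ∧ ρ.trace = 1

/-- Kronecker (tensor) product of a finite family of matrices. -/
def famKron {J : Type*} [Fintype J] {ι κ : J → Type*}
    (M : ∀ j, Matrix (ι j) (κ j) ℂ) : Matrix (∀ j, ι j) (∀ j, κ j) ℂ :=
  fun a b => ∏ j, M j (a j) (b j)

/-- The maximally entangled state `Φ₊ = (1/d) Σ_{j,k} |jj⟩⟨kk|` on `ℂ^d ⊗ ℂ^d`. -/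
def maxEnt (d : ℕ) : Matrix (Fin d × Fin d) (Fin d × Fin d) ℂ :=
  fun p q => if p.1 = p.2 ∧ q.1 = q.2 then (d : ℂ)⁻¹ else 0

/-- The generalized Bell projector `(I ⊗ U) Φ₊ (I ⊗ U)†`, acting on the pair
(ancilla A', party A), ancilla first. -/
def bellProj {d : ℕ} (U : Matrix (Fin d) (Fin d) ℂ) :
    Matrix (Fin d × Fin d) (Fin d × Fin d) ℂ :=
  ((1 : Matrix (Fin d) (Fin d) ℂ) ⊗ₖ U) * maxEnt d *
    ((1 : Matrix (Fin d) (Fin d) ℂ) ⊗ₖ U)ᴴ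

/-- The state on `⊗_j (A'_j ⊗ A_j)` obtained by placing `ρ` on the `A` parts (second
components) and `⊗_j ω_j` on the ancilla `A'` parts (first components). -/
def assemble {n : ℕ} {d : Fin n → ℕ}
    (ρ : Matrix (∀ j, Fin (d j)) (∀ j, Fin (d j)) ℂ)
    (ω : ∀ j, Matrix (Fin (d j)) (Fin (d j)) ℂ) :
    Matrix (∀ j, Fin (d j) × Fin (d j)) (∀ j, Fin (d j) × Fin (d j)) ℂ :=
  fun p q => (∏ j, ω j (p j).1 (q j).1) * ρ (fun j => (p j).2) (fun j => (q j).2)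

lemma bellProj_apply {m : ℕ} (U : Matrix (Fin m) (Fin m) ℂ) (p q : Fin m × Fin m) :
    bellProj U p q = (m : ℂ)⁻¹ * (U p.2 p.1 * star (U q.2 q.1)) := by
  simp only [bellProj, mul_apply, conjTranspose_apply, kroneckerMap_apply, one_apply, maxEnt,
    Fintype.sum_prod_type]
  simp [apply_ite (starRingEnd ℂ), ite_and, mul_ite, ite_mul, Finset.sum_ite_eq,
    Finset.sum_ite_eq', mul_comm, mul_assoc, mul_left_comm]

/-- split a pi-of-prod into a prod-of-pis -/
def splitE {n : ℕ} (d : Fin n → ℕ) :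
    ((∀ j, Fin (d j)) × (∀ j, Fin (d j))) ≃ (∀ j, Fin (d j) × Fin (d j)) where
  toFun x := fun j => (x.1 j, x.2 j)
  invFun p := (fun j => (p j).1, fun j => (p j).2)
  left_inv _ := rfl
  right_inv _ := rfl

lemma sum4 {α β γ δ M : Type*} [Fintype α] [Fintype β] [Fintype γ] [Fintype δ]
    [AddCommMonoid M] (f : α → β → γ → δ → M) :
    ∑ a, ∑ b, ∑ c, ∑ e, f a b c e = ∑ b, ∑ e, ∑ a, ∑ c, f a b c e := by
  rw [Finset.sum_comm]
  refine Finset.sum_congr rfl fun b _ => ?_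
  have h : ∀ a : α, ∑ c, ∑ e, f a b c e = ∑ e, ∑ c, f a b c e := fun a => Finset.sum_comm
  simp only [h]
  exact Finset.sum_comm

lemma key_sum {n : ℕ} {d : Fin n → ℕ}
    (V σ : ∀ j, Matrix (Fin (d j)) (Fin (d j)) ℂ) (b e : ∀ j, Fin (d j)) :
    ∑ a : ∀ j, Fin (d j), ∑ c : ∀ j, Fin (d j),
      ∏ j, ((d j : ℂ)⁻¹ * (V j (b j) (a j) * star (V j (e j) (c j)) * σ j (a j) (c j)))
    = ∏ j, ((d j : ℂ)⁻¹ * (V j * σ j * (V j)ᴴ) (b j) (e j)) := by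
  have per : ∀ j, (d j : ℂ)⁻¹ * (V j * σ j * (V j)ᴴ) (b j) (e j)
      = ∑ x : Fin (d j), ∑ y : Fin (d j),
          (d j : ℂ)⁻¹ * (V j (b j) x * star (V j (e j) y) * σ j x y) := by
    intro j
    simp only [mul_apply, conjTranspose_apply, Finset.mul_sum, Finset.sum_mul]
    rw [Finset.sum_comm]
    refine Finset.sum_congr rfl fun x _ => Finset.sum_congr rfl fun y _ => ?_
    ring
  calc ∑ a : ∀ j, Fin (d j), ∑ c : ∀ j, Fin (d j),
        ∏ j, ((d j : ℂ)⁻¹ * (V j (b j) (a j) * star (V j (e j) (c j)) * σ j (a j) (c j)))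
      = ∑ a : ∀ j, Fin (d j), ∏ j, ∑ y : Fin (d j),
          ((d j : ℂ)⁻¹ * (V j (b j) (a j) * star (V j (e j) y) * σ j (a j) y)) := by
        exact Finset.sum_congr rfl fun a _ => (Fintype.prod_sum (fun j y =>
          (d j : ℂ)⁻¹ * (V j (b j) (a j) * star (V j (e j) y) * σ j (a j) y))).symm
    _ = ∏ j, ∑ x : Fin (d j), ∑ y : Fin (d j),
          ((d j : ℂ)⁻¹ * (V j (b j) x * star (V j (e j) y) * σ j x y)) :=
        (Fintype.prod_sum (fun j x => ∑ y : Fin (d j),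
          ((d j : ℂ)⁻¹ * (V j (b j) x * star (V j (e j) y) * σ j x y)))).symm
    _ = _ := Finset.prod_congr rfl fun j _ => (per j).symm

lemma trace_bell_assemble {n : ℕ} {d : Fin n → ℕ}
    (V σ : ∀ j, Matrix (Fin (d j)) (Fin (d j)) ℂ)
    (ρ : Matrix (∀ j, Fin (d j)) (∀ j, Fin (d j)) ℂ) :
    (famKron (fun j => bellProj (V j)) * assemble ρ (fun j => (σ j)ᵀ)).trace
      = (∏ j, (d j : ℂ))⁻¹ * (famKron (fun j => V j * σ j * (V j)ᴴ) * ρ).trace := by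
  have h1 : (famKron (fun j => bellProj (V j)) * assemble ρ (fun j => (σ j)ᵀ)).trace
      = ∑ x : (∀ j, Fin (d j)) × (∀ j, Fin (d j)),
        ∑ y : (∀ j, Fin (d j)) × (∀ j, Fin (d j)),
          (∏ j, bellProj (V j) (x.1 j, x.2 j) (y.1 j, y.2 j)) *
          ((∏ j, σ j (x.1 j) (y.1 j)) * ρ y.2 x.2) := by
    rw [Matrix.trace, ← Equiv.sum_comp (splitE d)]
    refine Finset.sum_congr rfl fun x _ => ?_
    rw [Matrix.diag_apply, mul_apply, ← Equiv.sum_comp (splitE d)]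
    refine Finset.sum_congr rfl fun y _ => ?_
    simp only [famKron, assemble, transpose_apply, splitE, Equiv.coe_fn_mk]
  rw [h1]
  simp only [Fintype.sum_prod_type]
  have h2 : ∀ (a b c e : ∀ j, Fin (d j)),
      (∏ j, bellProj (V j) (a j, b j) (c j, e j)) * ((∏ j, σ j (a j) (c j)) * ρ e b)
      = (∏ j, ((d j : ℂ)⁻¹ * (V j (b j) (a j) * star (V j (e j) (c j)) * σ j (a j) (c j))))
          * ρ e b := by
    intro a b c e
    rw [← mul_assoc, ← Finset.prod_mul_distrib]
    congr 1
    refine Finset.prod_congr rfl fun j _ => ?_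
    rw [bellProj_apply]
    ring
  simp only [h2]
  rw [sum4]
  have h3 : ∀ (b e : ∀ j, Fin (d j)),
      ∑ a : ∀ j, Fin (d j), ∑ c : ∀ j, Fin (d j),
        (∏ j, ((d j : ℂ)⁻¹ * (V j (b j) (a j) * star (V j (e j) (c j)) * σ j (a j) (c j))))
          * ρ e b
      = (∏ j, (d j : ℂ))⁻¹ * (famKron (fun j => V j * σ j * (V j)ᴴ) b e * ρ e b) := by
    intro b e
    simp only [← Finset.sum_mul]
    rw [key_sum, Finset.prod_mul_distrib, ← Finset.prod_inv_distrib]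
    simp [famKron, mul_assoc]
  simp only [h3]
  simp only [Matrix.trace, Matrix.diag_apply, mul_apply, Finset.mul_sum]

/-- Completeness of the MDI value: if `W = Σ_k β^i_k ⊗_j U_{i_j} τ_{k_j} U_{i_j}†`
for every outcome tuple `i`, and the inputs are `ω_k = τ_kᵀ`, then
`Σ_{i,k} β^i_k P(i|k) = (Π_j d_j) · tr(W ρ)`. -/
theorem mdi_value_completeness
    {n : ℕ} (d : Fin n → ℕ)
    (U : ∀ j, Fin ((d j) ^ 2) → Matrix (Fin (d j)) (Fin (d j)) ℂ)
    (hU : ∀ j i, (U j i)ᴴ * U j i = 1)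
    (horth : ∀ j i i', ((U j i)ᴴ * U j i').trace = if i = i' then (d j : ℂ) else 0)
    (ρ : Matrix (∀ j, Fin (d j)) (∀ j, Fin (d j)) ℂ) (hρ : IsDensity ρ)
    (W : Matrix (∀ j, Fin (d j)) (∀ j, Fin (d j)) ℂ) (hW : W.IsHermitian)
    (τ : ∀ j, Fin ((d j) ^ 2) → Matrix (Fin (d j)) (Fin (d j)) ℂ)
    (hτ : ∀ j k, IsDensity (τ j k))
    (β : (∀ j, Fin ((d j) ^ 2)) → (∀ j, Fin ((d j) ^ 2)) → ℝ)
    (hdecomp : ∀ i, W = ∑ k : ∀ j, Fin ((d j) ^ 2),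
      (β i k : ℂ) • famKron (fun j => U j (i j) * τ j (k j) * (U j (i j))ᴴ)) :
    ∑ i : ∀ j, Fin ((d j) ^ 2), ∑ k : ∀ j, Fin ((d j) ^ 2),
      (β i k : ℂ) *
        (famKron (fun j => bellProj (U j (i j))) *
          assemble ρ (fun j => (τ j (k j))ᵀ)).trace
      = (∏ j, (d j : ℂ)) * (W * ρ).trace := by
  by_cases hne : Nonempty (∀ j, Fin ((d j) ^ 2))
  · have hd : ∀ j, d j ≠ 0 := by
      intro j hj
      have := (Classical.arbitrary (∀ j, Fin ((d j) ^ 2))) j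
      rw [hj] at this
      exact absurd this.2 (by simp)
    have hprod : (∏ j, (d j : ℂ)) ≠ 0 := by
      rw [Finset.prod_ne_zero_iff]
      intro j _
      exact_mod_cast hd j
    have step : ∀ i : ∀ j, Fin ((d j) ^ 2),
        ∑ k : ∀ j, Fin ((d j) ^ 2),
          (β i k : ℂ) * (famKron (fun j => bellProj (U j (i j))) *
            assemble ρ (fun j => (τ j (k j))ᵀ)).trace
        = (∏ j, (d j : ℂ))⁻¹ * (W * ρ).trace := by
      intro i
      have : ∀ k : ∀ j, Fin ((d j) ^ 2),
          (β i k : ℂ) * (famKron (fun j => bellProj (U j (i j))) *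
            assemble ρ (fun j => (τ j (k j))ᵀ)).trace
          = (∏ j, (d j : ℂ))⁻¹ *
            ((β i k : ℂ) •
              famKron (fun j => U j (i j) * τ j (k j) * (U j (i j))ᴴ) * ρ).trace := by
        intro k
        rw [trace_bell_assemble (fun j => U j (i j)) (fun j => τ j (k j)) ρ,
          smul_mul_assoc, trace_smul]
        simp only [smul_eq_mul]
        ring
      rw [Finset.sum_congr rfl fun k _ => this k, ← Finset.mul_sum, ← trace_sum,
        ← Finset.sum_mul, ← hdecomp i]
    rw [Finset.sum_congr rfl fun i _ => step i, Finset.sum_const, nsmul_eq_mul]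
    have hcard : (Fintype.card (∀ j, Fin ((d j) ^ 2)) : ℂ) = (∏ j, (d j : ℂ)) ^ 2 := by
      simp [Fintype.card_pi, ← Finset.prod_pow]
    rw [Finset.card_univ, hcard]
    field_simp
  · rw [not_nonempty_iff] at hne
    rw [Finset.univ_eq_empty, Finset.sum_empty]
    have : ∃ j, d j = 0 := by
      by_contra h
      push_neg at h
      exact hne.elim <| (fun j => ⟨0, by have := Nat.pos_of_ne_zero (h j); positivity⟩)
    obtain ⟨j, hj⟩ := this
    rw [Finset.prod_eq_zero (Finset.mem_univ j) (by rw [hj]; norm_num), zero_mul]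
end
end

section
/- (Soundness identity) Let ρ be a density matrix on ⊗_{j=1}^n ℂ^{d_j} (parties A_j), let {U^{(j)}_i}_{i=0}^{d_j²−1} be orthogonal unitary bases of M_{d_j}(ℂ), let W be Hermitian on ⊗_j ℂ^{d_j} with real coefficients β^{i_1…i_n}_{k_1…k_n} and density matrices τ^{(j)}_k such that W = Σ_{k} β^{i}_{k} ⊗_j U^{(j)}_{i_j} τ^{(j)}_{k_j} U^{(j)†}_{i_j} for every tuple i, and set ω^{(j)}_k = (τ^{(j)}_k)^T. Let μ range over a finite set with probability weights π(μ), and for each μ and each j let {Ξ^{(j)}_{μ,i}}_{i=0}^{d_j²−1} be a POVM on ℂ^{d_j}⊗ℂ^{d_j} (acting on the pair A'_j⊗A_j, ancilla first). Define the manipulated probabilities P_Eve(i_1,…,i_n | k_1,…,k_n) = tr[(Σ_μ π(μ) ⊗_j Ξ^{(j)}_{μ,i_j}) · (ρ on the A parts, ⊗_j ω^{(j)}_{k_j} on the A' parts)], define N_{μ; i_1…i_n} to be the matrix on ⊗_j ℂ^{d_j} (the A' parts) obtained by partially tracing out all A parts of (⊗_j Ξ^{(j)}_{μ,i_j}) ·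 (ρ placed on the A parts and identity on the A' parts), and define ς = Σ_μ π(μ) Σ_{i_1,…,i_n} (⊗_j (U^{(j)}_{i_j})^*) N_{μ;i_1…i_n} (⊗_j (U^{(j)}_{i_j})^T). Then Σ_{i,k} β^{i}_{k} P_Eve(i|k) = tr(W^T ς) = tr(W ς^T). -/
open Matrix BigOperators
open scoped ComplexOrder Kronecker

noncomputable section

/-- Partial trace over all the `A` parts (the second components of the pairs). -/
def ptraceA {n : ℕ} {d : Fin n → ℕ}
    (M : Matrix (∀ j, Fin (d j) × Fin (d j)) (∀ j, Fin (d j) × Fin (d j)) ℂ) :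
    Matrix (∀ j, Fin (d j)) (∀ j, Fin (d j)) ℂ :=
  fun a' b' => ∑ a : ∀ j, Fin (d j), M (fun j => (a' j, a j)) (fun j => (b' j, a j))

/-- `N_{μ;i}`: the matrix on the ancilla (`A'`) parts obtained by partially tracing out
all `A` parts of `(⊗_j Ξ_{μ,i_j}) · (ρ on A, identity on A')`. -/
def NEve {n M : ℕ} {d : Fin n → ℕ}
    (Ξ : Fin M → ∀ j, Fin ((d j) ^ 2) →
      Matrix (Fin (d j) × Fin (d j)) (Fin (d j) × Fin (d j)) ℂ)
    (ρ : Matrix (∀ j, Fin (d j)) (∀ j, Fin (d j)) ℂ)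
    (μ : Fin M) (i : ∀ j, Fin ((d j) ^ 2)) :
    Matrix (∀ j, Fin (d j)) (∀ j, Fin (d j)) ℂ :=
  ptraceA (famKron (fun j => Ξ μ j (i j)) *
    assemble ρ (fun j => (1 : Matrix (Fin (d j)) (Fin (d j)) ℂ)))

/-- The effective state
`ς = Σ_μ π(μ) Σ_i (⊗_j U_{i_j}^*) N_{μ;i} (⊗_j U_{i_j}ᵀ)` produced by Eve. -/
def sigmaEve {n M : ℕ} {d : Fin n → ℕ} (π : Fin M → ℝ)
    (Ξ : Fin M → ∀ j, Fin ((d j) ^ 2) →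
      Matrix (Fin (d j) × Fin (d j)) (Fin (d j) × Fin (d j)) ℂ)
    (U : ∀ j, Fin ((d j) ^ 2) → Matrix (Fin (d j)) (Fin (d j)) ℂ)
    (ρ : Matrix (∀ j, Fin (d j)) (∀ j, Fin (d j)) ℂ) :
    Matrix (∀ j, Fin (d j)) (∀ j, Fin (d j)) ℂ :=
  ∑ μ, (π μ : ℂ) • ∑ i : ∀ j, Fin ((d j) ^ 2),
    famKron (fun j => ((U j (i j))ᵀ)ᴴ) * NEve Ξ ρ μ i *
      famKron (fun j => (U j (i j))ᵀ)

/-- Full separability of an `n`-partite state. -/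
def FullySeparable {n : ℕ} {d : Fin n → ℕ}
    (ρ : Matrix (∀ j, Fin (d j)) (∀ j, Fin (d j)) ℂ) : Prop :=
  ∃ (M : ℕ) (w : Fin M → ℝ)
    (σ : Fin M → ∀ j, Matrix (Fin (d j)) (Fin (d j)) ℂ),
    (∀ m, 0 ≤ w m) ∧ (∑ m, w m = 1) ∧
    (∀ m j, IsDensity (σ m j)) ∧
    ρ = ∑ m, (w m : ℂ) • famKron (σ m)

/-!
Conjugating `Wᵀ` by `⊗_j U_{i_j}ᵀ` turns the decomposition of `W` indexed by `i` into
`Σ_k β^i_k ⊗_j (τ^{(j)}_{k_j})ᵀ`, because `U_iᵀ (U_iᵀ)ᴴ = (U_iᴴ U_i)ᵀ = 1`. By cyclicity of the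
trace, `tr(Wᵀ ς)` is then a combination of the numbers `tr((⊗_j ω_{k_j}) N_{μ;i})`, and each of
these is the corresponding outcome probability: putting `ω` on the ancillas after tracing out
the `A` parts is the same as putting it there before, `tr(ω · Tr_A X) = tr(X (ω ⊗ 1))`.
-/

lemma famKron_mul {J : Type*} [Fintype J] [DecidableEq J] {ι κ σ : J → Type*}
    [∀ j, Fintype (κ j)] (A : ∀ j, Matrix (ι j) (κ j) ℂ) (B : ∀ j, Matrix (κ j) (σ j) ℂ) :
    famKron A * famKron B = famKron (fun j => A j * B j) := by
  ext a b
  simp only [famKron, mul_apply, ← Finset.prod_mul_distrib, Finset.prod_univ_sum,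
    Fintype.piFinset_univ]

lemma famKron_transpose {J : Type*} [Fintype J] {ι κ : J → Type*}
    (A : ∀ j, Matrix (ι j) (κ j) ℂ) : (famKron A)ᵀ = famKron (fun j => (A j)ᵀ) :=
  rfl

lemma famKron_one {J : Type*} [Fintype J] {ι : J → Type*} [∀ j, DecidableEq (ι j)] :
    famKron (fun j => (1 : Matrix (ι j) (ι j) ℂ)) = 1 := by
  ext a b
  simp only [famKron, one_apply, Finset.prod_boole, Finset.mem_univ, true_implies, funext_iff]

lemma transpose_conj_unitary_conj {ι R : Type*} [Fintype ι] [DecidableEq ι] [CommRing R]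
    [StarRing R] (V T : Matrix ι ι R) (hV : Vᴴ * V = 1) : Vᵀ * (V * T * Vᴴ)ᵀ * (Vᵀ)ᴴ = Tᵀ := by
  have hVt : Vᵀ * Vᴴᵀ = 1 := by rw [← transpose_mul, hV, transpose_one]
  rw [transpose_conjTranspose, transpose_mul, transpose_mul]
  calc Vᵀ * (Vᴴᵀ * (Tᵀ * Vᵀ)) * Vᴴᵀ = (Vᵀ * Vᴴᵀ) * Tᵀ * (Vᵀ * Vᴴᵀ) := by noncomm_ring
    _ = Tᵀ := by rw [hVt, one_mul, mul_one]

lemma famKron_transpose_conj_eq_sum {J K : Type*} [Fintype J] [DecidableEq J] [Fintype K]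
    {ι : J → Type*} [∀ j, Fintype (ι j)] [∀ j, DecidableEq (ι j)]
    (V : ∀ j, Matrix (ι j) (ι j) ℂ) (hV : ∀ j, (V j)ᴴ * V j = 1) (c : K → ℂ)
    (T : K → ∀ j, Matrix (ι j) (ι j) ℂ) (W : Matrix (∀ j, ι j) (∀ j, ι j) ℂ)
    (hW : W = ∑ k, c k • famKron (fun j => V j * T k j * (V j)ᴴ)) :
    famKron (fun j => (V j)ᵀ) * Wᵀ * famKron (fun j => ((V j)ᵀ)ᴴ)
      = ∑ k, c k • famKron (fun j => (T k j)ᵀ) := by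
  rw [hW, transpose_sum, Matrix.mul_sum, Matrix.sum_mul]
  refine Finset.sum_congr rfl fun k _ => ?_
  rw [transpose_smul, Matrix.mul_smul, Matrix.smul_mul, famKron_transpose, famKron_mul,
    famKron_mul]
  simp only [← famKron_transpose, transpose_conj_unitary_conj _ _ (hV _)]

namespace Matrix

variable {ι ι' κ R : Type*} [Fintype κ]

def traceRight [AddCommMonoid R] (A : Matrix (ι × κ) (ι' × κ) R) : Matrix ι ι' R :=
  fun i i' => ∑ k, A (i, k) (i', k)

lemma trace_mul_kronecker_one [Fintype ι] [Fintype ι'] [DecidableEq κ] [CommSemiring R]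
    (A : Matrix (ι × κ) (ι' × κ) R) (B : Matrix ι' ι R) :
    trace (A * (B ⊗ₖ (1 : Matrix κ κ R))) = trace (B * traceRight A) := by
  simp only [trace, diag_apply, mul_apply, traceRight, Fintype.sum_prod_type, Finset.mul_sum,
    kroneckerMap_apply, one_apply, mul_ite, mul_one, mul_zero, Finset.sum_ite_eq',
    Finset.mem_univ, if_true]
  conv_rhs => rw [Finset.sum_comm]
  refine Finset.sum_congr rfl fun i _ => ?_
  rw [Finset.sum_comm]
  simp only [mul_comm]

lemma trace_mul_traceRight_mul_one_kronecker [Fintype ι] [DecidableEq ι] [DecidableEq κ]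
    [CommSemiring R] (A : Matrix (ι × κ) (ι × κ) R) (B : Matrix ι ι R) (C : Matrix κ κ R) :
    trace (B * traceRight (A * ((1 : Matrix ι ι R) ⊗ₖ C))) = trace (A * (B ⊗ₖ C)) := by
  rw [← trace_mul_kronecker_one, Matrix.mul_assoc, ← mul_kronecker_mul, one_mul, mul_one]

lemma trace_submatrix_equiv {m n : Type*} [Fintype m] [Fintype n] [AddCommMonoid R]
    (A : Matrix n n R) (e : m ≃ n) : trace (A.submatrix e e) = trace A :=
  e.sum_comp A.diag

end Matrix

section PartialTrace

variable {n : ℕ} {d : Fin n → ℕ}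

abbrev pairEquiv (d : Fin n → ℕ) :
    (∀ j, Fin (d j) × Fin (d j)) ≃ (∀ j, Fin (d j)) × (∀ j, Fin (d j)) :=
  Equiv.arrowProdEquivProdArrow (Fin n) (fun j => Fin (d j)) (fun j => Fin (d j))

lemma assemble_eq_submatrix_kronecker (ρ : Matrix (∀ j, Fin (d j)) (∀ j, Fin (d j)) ℂ)
    (ω : ∀ j, Matrix (Fin (d j)) (Fin (d j)) ℂ) :
    assemble ρ ω = (famKron ω ⊗ₖ ρ).submatrix (pairEquiv d) (pairEquiv d) :=
  rfl

lemma ptraceA_eq_traceRight_submatrix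
    (A : Matrix (∀ j, Fin (d j) × Fin (d j)) (∀ j, Fin (d j) × Fin (d j)) ℂ) :
    ptraceA A = traceRight (A.submatrix (pairEquiv d).symm (pairEquiv d).symm) :=
  rfl

lemma trace_famKron_mul_ptraceA_mul_assemble
    (A : Matrix (∀ j, Fin (d j) × Fin (d j)) (∀ j, Fin (d j) × Fin (d j)) ℂ)
    (ρ : Matrix (∀ j, Fin (d j)) (∀ j, Fin (d j)) ℂ)
    (ω : ∀ j, Matrix (Fin (d j)) (Fin (d j)) ℂ) :
    trace (famKron ω * ptraceA (A * assemble ρ (fun _ => 1))) = trace (A * assemble ρ ω) := by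
  obtain ⟨B, rfl⟩ : ∃ B, A = B.submatrix (pairEquiv d) (pairEquiv d) :=
    ⟨A.submatrix (pairEquiv d).symm (pairEquiv d).symm, by simp⟩
  rw [ptraceA_eq_traceRight_submatrix, assemble_eq_submatrix_kronecker,
    assemble_eq_submatrix_kronecker, submatrix_mul_equiv, submatrix_mul_equiv,
    trace_submatrix_equiv, submatrix_submatrix, Equiv.self_comp_symm, submatrix_id_id,
    famKron_one, trace_mul_traceRight_mul_one_kronecker]

end PartialTrace

theorem soundness_identity_general
    {n M : ℕ} (d : Fin n → ℕ)
    (U : ∀ j, Fin ((d j) ^ 2) → Matrix (Fin (d j)) (Fin (d j)) ℂ)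
    (hU : ∀ j i, (U j i)ᴴ * U j i = 1)
    (ρ : Matrix (∀ j, Fin (d j)) (∀ j, Fin (d j)) ℂ)
    (W : Matrix (∀ j, Fin (d j)) (∀ j, Fin (d j)) ℂ)
    (τ : ∀ j, Fin ((d j) ^ 2) → Matrix (Fin (d j)) (Fin (d j)) ℂ)
    (β : (∀ j, Fin ((d j) ^ 2)) → (∀ j, Fin ((d j) ^ 2)) → ℝ)
    (hdecomp : ∀ i, W = ∑ k : ∀ j, Fin ((d j) ^ 2),
      (β i k : ℂ) • famKron (fun j => U j (i j) * τ j (k j) * (U j (i j))ᴴ))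
    (π : Fin M → ℝ)
    (Ξ : Fin M → ∀ j, Fin ((d j) ^ 2) →
      Matrix (Fin (d j) × Fin (d j)) (Fin (d j) × Fin (d j)) ℂ) :
    (∑ i : ∀ j, Fin ((d j) ^ 2), ∑ k : ∀ j, Fin ((d j) ^ 2),
      (β i k : ℂ) *
        ((∑ μ, (π μ : ℂ) • famKron (fun j => Ξ μ j (i j))) *
          assemble ρ (fun j => (τ j (k j))ᵀ)).trace)
      = (Wᵀ * sigmaEve π Ξ U ρ).trace ∧
    (Wᵀ * sigmaEve π Ξ U ρ).trace = (W * (sigmaEve π Ξ U ρ)ᵀ).trace := by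
  have term : ∀ μ i, trace (Wᵀ * (famKron (fun j => ((U j (i j))ᵀ)ᴴ) * NEve Ξ ρ μ i *
      famKron (fun j => (U j (i j))ᵀ))) = ∑ k, (β i k : ℂ) *
        trace (famKron (fun j => Ξ μ j (i j)) * assemble ρ (fun j => (τ j (k j))ᵀ)) := by
    intro μ i
    rw [← Matrix.mul_assoc, trace_mul_cycle, ← Matrix.mul_assoc,
      famKron_transpose_conj_eq_sum _ (fun j => hU j (i j)) _ _ W (hdecomp i), Matrix.sum_mul,
      trace_sum]
    simp only [Matrix.smul_mul, trace_smul, smul_eq_mul, NEve,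
      trace_famKron_mul_ptraceA_mul_assemble]
  constructor
  · calc _ = ∑ μ, (π μ : ℂ) * ∑ i, ∑ k, (β i k : ℂ) *
          trace (famKron (fun j => Ξ μ j (i j)) * assemble ρ (fun j => (τ j (k j))ᵀ)) := by
          simp only [Matrix.sum_mul, Matrix.smul_mul, trace_sum, trace_smul, smul_eq_mul,
            Finset.mul_sum]
          rw [Finset.sum_comm_cycle]
          exact Finset.sum_congr rfl fun _ _ => Finset.sum_congr rfl fun _ _ =>
            Finset.sum_congr rfl fun _ _ => mul_left_comm _ _ _
      _ = _ := by
          simp only [← term, sigmaEve, Matrix.mul_sum, Matrix.mul_smul, trace_sum, trace_smul,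
            smul_eq_mul]
  · rw [← trace_transpose (W * _), transpose_mul, transpose_transpose, trace_mul_comm]

/-- Soundness identity: for any manipulation by Eve (shared randomness `π` and local
POVMs `Ξ_{μ}^{(j)}` on the pairs `A'_j ⊗ A_j`), the MDI value equals
`tr(Wᵀ ς) = tr(W ςᵀ)` for the effective state `ς`. -/
theorem soundness_identity
    {n M : ℕ} (d : Fin n → ℕ)
    (U : ∀ j, Fin ((d j) ^ 2) → Matrix (Fin (d j)) (Fin (d j)) ℂ)
    (hU : ∀ j i, (U j i)ᴴ * U j i = 1)
    (horth : ∀ j i i', ((U j i)ᴴ * U j i').trace = if i = i' then (d j : ℂ) else 0)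
    (ρ : Matrix (∀ j, Fin (d j)) (∀ j, Fin (d j)) ℂ) (hρ : IsDensity ρ)
    (W : Matrix (∀ j, Fin (d j)) (∀ j, Fin (d j)) ℂ) (hW : W.IsHermitian)
    (τ : ∀ j, Fin ((d j) ^ 2) → Matrix (Fin (d j)) (Fin (d j)) ℂ)
    (hτ : ∀ j k, IsDensity (τ j k))
    (β : (∀ j, Fin ((d j) ^ 2)) → (∀ j, Fin ((d j) ^ 2)) → ℝ)
    (hdecomp : ∀ i, W = ∑ k : ∀ j, Fin ((d j) ^ 2),
      (β i k : ℂ) • famKron (fun j => U j (i j) * τ j (k j) * (U j (i j))ᴴ))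
    (π : Fin M → ℝ) (hπ0 : ∀ μ, 0 ≤ π μ) (hπ1 : ∑ μ, π μ = 1)
    (Ξ : Fin M → ∀ j, Fin ((d j) ^ 2) →
      Matrix (Fin (d j) × Fin (d j)) (Fin (d j) × Fin (d j)) ℂ)
    (hΞpos : ∀ μ j i, (Ξ μ j i).PosSemidef)
    (hΞsum : ∀ μ j, ∑ i, Ξ μ j i = 1) :
    (∑ i : ∀ j, Fin ((d j) ^ 2), ∑ k : ∀ j, Fin ((d j) ^ 2),
      (β i k : ℂ) *
        ((∑ μ, (π μ : ℂ) • famKron (fun j => Ξ μ j (i j))) *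
          assemble ρ (fun j => (τ j (k j))ᵀ)).trace)
      = (Wᵀ * sigmaEve π Ξ U ρ).trace ∧
    (Wᵀ * sigmaEve π Ξ U ρ).trace = (W * (sigmaEve π Ξ U ρ)ᵀ).trace :=
  soundness_identity_general d U hU ρ W τ β hdecomp π Ξ
end
end
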